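/- For every r ≥ 3 and t ≥ 1, there exists a complete r-uniform r-partite hypergraph with a spanning (r+t)-coloring of its edges such that the vertex set cannot be covered by t monochromatic components. In other words, cov(r, r+t) ≥ t+1. -/

import Mathlib

open Classical

variable {V : Type*}

/-- `e` is an edge of the complete `r`-uniform `r`-partite hypergraph with
partition `part`: it meets every class in exactly one vertex. -/
def IsPartiteEdge {r : ℕ} (part : V → Fin r) (e : Finset V) : Prop :=
  ∀ i : Fin r, (e.filter fun v => part v = i).card = 1

/-- `e` is an edge of the complete `r`-uniform `(r,ℓ)`-partite hypergraph:
an `r`-set meeting every class in at most `ℓ` vertices. -/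
def IsRLEdge {r : ℕ} (part : V → Fin r) (ℓ : ℕ) (e : Finset V) : Prop :=
  e.card = r ∧ ∀ i : Fin r, (e.filter fun v => part v = i).card ≤ ℓ

/-- An edge is friendly if it meets at most one class in exactly `ℓ` vertices. -/
def Friendly {r : ℕ} (part : V → Fin r) (ℓ : ℕ) (e : Finset V) : Prop :=
  (Finset.univ.filter fun i : Fin r => (e.filter fun v => part v = i).card = ℓ).card ≤ 1

/-- `u` and `v` lie in the same monochromatic component of color `c` of the
hypergraph with edge predicate `E` and edge coloring `χ`. -/
def MonoConn {k : ℕ} (E : Finset V → Prop) (χ : Finset V → Fin k) (c : Fin k)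
    (u v : V) : Prop :=
  Relation.ReflTransGen (fun a b => ∃ e : Finset V, E e ∧ χ e = c ∧ a ∈ e ∧ b ∈ e) u v

/-- The coloring `χ` is spanning: every vertex is incident with an edge of every color. -/
def Spanning {k : ℕ} (E : Finset V → Prop) (χ : Finset V → Fin k) : Prop :=
  ∀ v : V, ∀ c : Fin k, ∃ e : Finset V, E e ∧ χ e = c ∧ v ∈ e

/-- The vertex set can be covered by at most `m` monochromatic components. -/
def CoversBy {k : ℕ} (E : Finset V → Prop) (χ : Finset V → Fin k) (m : ℕ) : Prop :=
  ∃ f : Fin m → Fin k × V, ∀ v : V, ∃ i : Fin m, MonoConn E χ (f i).1 (f i).2 v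

/-- Hamming distance of the component vectors of two vertices: the number of
colors `c` for which they lie in different monochromatic components of color `c`. -/
noncomputable def HamDist {k : ℕ} (E : Finset V → Prop) (χ : Finset V → Fin k)
    (v w : V) : ℕ :=
  (Finset.univ.filter fun c : Fin k => ¬ MonoConn E χ c v w).card

/-!
Vertices carry a label vector in `Fin (t + 1) ^ (r + t)`, which counts only if its support is
small: at most `t` for the class `0`, at most `1` for the other classes. An edge has one vertex
per class, so the supports of its labels cover at most `t + r - 1 < r + t` colours; at any other
colour all its labels vanish. Hence every edge can be coloured by a colour `c` at which all its
vertices have the same label coordinate, and then the `c`-th label coordinate is constant on each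
component of colour `c`. A tag on each vertex lets the tag sum of an edge prescribe its colour
whenever that is allowed, which makes the colouring spanning. Finally, a component of colour `c`
fixes one value of the `c`-th coordinate, so `t` components fix at most `t` values of each
coordinate; with `t + 1` values available, a class-`0` vertex whose label avoids all of them (and
is `0` at the colours of no component) lies in none of them.
-/

open Finset

section Components

variable {k : ℕ} {E : Finset V → Prop} {χ : Finset V → Fin k} {α : Type*}

theorem MonoConn.apply_eq {f : V → Fin k → α}
    (hf : ∀ e, E e → ∀ v ∈ e, ∀ w ∈ e, f v (χ e) = f w (χ e)) {c : Fin k} {u v : V}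
    (h : MonoConn E χ c u v) : f u c = f v c := by
  induction h with
  | refl => rfl
  | tail _ hstep ih =>
    obtain ⟨e, he, rfl, ha, hb⟩ := hstep
    exact ih.trans (hf e he _ ha _ hb)

theorem not_coversBy_of_forall_exists_apply_eq [Fintype α] {f : V → Fin k → α}
    (hf : ∀ e, E e → ∀ v ∈ e, ∀ w ∈ e, f v (χ e) = f w (χ e)) (a : α) {m : ℕ}
    (hm : m < Fintype.card α)
    (hsurj : ∀ ψ : Fin k → α, #{c | ψ c ≠ a} ≤ m → ∃ v, f v = ψ) :
    ¬ CoversBy E χ m := by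
  rintro ⟨g, hg⟩
  let taken : Fin k → Finset α := fun c => image (fun i => f (g i).2 c) {i | (g i).1 = c}
  have hfree : ∀ c, ∃ x ∉ taken c, a ∉ taken c → x = a := by
    intro c
    by_cases ha : a ∈ taken c
    · have hlt : #(taken c) < #(univ : Finset α) :=
        calc #(taken c) ≤ #(univ : Finset (Fin m)) := card_image_le.trans (card_filter_le _ _)
          _ < #(univ : Finset α) := by simpa using hm
      obtain ⟨x, -, hx⟩ := exists_mem_notMem_of_card_lt_card hlt
      exact ⟨x, hx, fun h => (h ha).elim⟩
    · exact ⟨a, ha, fun _ => rfl⟩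
  choose ψ hψ hψa using hfree
  have hsupp : #{c | ψ c ≠ a} ≤ m := by
    refine (card_le_card (t := univ.image fun i => (g i).1) fun c hc => ?_).trans
      (card_image_le.trans (card_fin m).le)
    have hac : a ∈ taken c := by
      by_contra h
      exact (mem_filter.1 hc).2 (hψa c h)
    obtain ⟨i, hi, -⟩ := mem_image.1 hac
    exact mem_image.2 ⟨i, mem_univ i, (mem_filter.1 hi).2⟩
  obtain ⟨v, rfl⟩ := hsurj ψ hsupp
  obtain ⟨i, hi⟩ := hg v
  apply hψ (g i).1
  rw [← MonoConn.apply_eq hf hi]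
  exact mem_image.2 ⟨i, mem_filter.2 ⟨mem_univ i, rfl⟩, rfl⟩

theorem IsPartiteEdge.sum_comp {r : ℕ} {part : V → Fin r} {e : Finset V}
    (he : IsPartiteEdge part e) {M : Type*} [AddCommMonoid M] (g : Fin r → M) :
    ∑ v ∈ e, g (part v) = ∑ i, g i := by
  rw [← sum_fiberwise_of_maps_to fun v _ => mem_univ (part v)]
  refine sum_congr rfl fun i _ => ?_
  obtain ⟨a, ha⟩ := card_eq_one.1 (he i)
  have hai : a ∈ e.filter fun v => part v = i := by
    rw [ha]
    exact mem_singleton_self a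
  rw [ha, sum_singleton, (mem_filter.1 hai).2]

theorem isPartiteEdge_image [DecidableEq V] {r : ℕ} {part : V → Fin r} (w : Fin r → V)
    (hw : ∀ j, part (w j) = j) : IsPartiteEdge part (univ.image w) := by
  intro i
  refine card_eq_one.2 ⟨w i, ?_⟩
  ext v
  simp only [mem_filter, mem_image, mem_univ, true_and, mem_singleton]
  constructor
  · rintro ⟨⟨j, rfl⟩, hj⟩
    rw [← hj, hw]
  · rintro rfl
    exact ⟨⟨i, rfl⟩, hw i⟩

theorem card_filter_pi_single_ne_zero_le_one {ι M : Type*} [Fintype ι] [DecidableEq ι] [Zero M]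
    [DecidableEq M] (i : ι) (x : M) : #{j | (Pi.single i x : ι → M) j ≠ 0} ≤ 1 := by
  have hsupp : ∀ j, (Pi.single i x : ι → M) j ≠ 0 → j = i := fun j hj =>
    by_contra fun h => hj (Pi.single_eq_of_ne (M := fun _ => M) h x)
  exact card_le_one.2 fun a ha b hb =>
    (hsupp a (mem_filter.1 ha).2).trans (hsupp b (mem_filter.1 hb).2).symm

end Components

namespace PartiteCover

/-- A vertex is a triple (class, label vector, tag). -/
abbrev Vertex (r t : ℕ) : Type := Fin r × (Fin (r + t) → Fin (t + 1)) × Fin (r + t)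

variable {r t : ℕ}

def budget (t : ℕ) (i : Fin r) : ℕ := if (i : ℕ) = 0 then t else 1

theorem one_le_budget (ht : 1 ≤ t) (i : Fin r) : 1 ≤ budget t i := by
  unfold budget
  split_ifs <;> omega

theorem sum_budget (hr : 0 < r) : ∑ i : Fin r, budget t i = t + (r - 1) := by
  obtain ⟨r, rfl⟩ := Nat.exists_eq_add_of_lt hr
  simp [Fin.sum_univ_succ, budget]

noncomputable def effLabel (v : Vertex r t) : Fin (r + t) → Fin (t + 1) :=
  if #{c | v.2.1 c ≠ 0} ≤ budget t v.1 then v.2.1 else 0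

theorem effLabel_of_card_support_le {v : Vertex r t} (h : #{c | v.2.1 c ≠ 0} ≤ budget t v.1) :
    effLabel v = v.2.1 :=
  if_pos h

theorem card_support_effLabel_le (v : Vertex r t) :
    #{c | effLabel v c ≠ 0} ≤ budget t v.1 := by
  unfold effLabel
  split_ifs with h
  · exact h
  · simp

noncomputable def agreeColors (e : Finset (Vertex r t)) : Finset (Fin (r + t)) :=
  {c | ∀ v ∈ e, ∀ w ∈ e, effLabel v c = effLabel w c}

theorem agreeColors_nonempty (hr : 0 < r) {e : Finset (Vertex r t)}
    (he : IsPartiteEdge Prod.fst e) : (agreeColors e).Nonempty := by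
  let S := e.biUnion fun v => ({c | effLabel v c ≠ 0} : Finset (Fin (r + t)))
  have hS : #S < #(univ : Finset (Fin (r + t))) :=
    calc #S ≤ ∑ v ∈ e, #{c | effLabel v c ≠ 0} := card_biUnion_le
      _ ≤ ∑ v ∈ e, budget t v.1 := sum_le_sum fun v _ => card_support_effLabel_le v
      _ = t + (r - 1) := by rw [he.sum_comp (budget t), sum_budget hr]
      _ < #(univ : Finset (Fin (r + t))) := by simp only [card_univ, Fintype.card_fin]; omega
  obtain ⟨c, -, hc⟩ := exists_mem_notMem_of_card_lt_card hS
  have hzero : ∀ v ∈ e, effLabel v c = 0 := fun v hv => by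
    by_contra h
    exact hc (mem_biUnion.2 ⟨v, hv, mem_filter.2 ⟨mem_univ c, h⟩⟩)
  exact ⟨c, mem_filter.2 ⟨mem_univ c, fun v hv w hw =>
    (hzero v hv).trans (hzero w hw).symm⟩⟩

variable [NeZero (r + t)]

def tagSum (e : Finset (Vertex r t)) : Fin (r + t) := ∑ v ∈ e, v.2.2

noncomputable def coloring (e : Finset (Vertex r t)) : Fin (r + t) :=
  if tagSum e ∈ agreeColors e then tagSum e else Classical.epsilon (· ∈ agreeColors e)

theorem coloring_mem_agreeColors {e : Finset (Vertex r t)} (h : (agreeColors e).Nonempty) :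
    coloring e ∈ agreeColors e := by
  unfold coloring
  split_ifs with hsum
  · exact hsum
  · exact Classical.epsilon_spec h

theorem effLabel_coloring_eq (hr : 0 < r) {e : Finset (Vertex r t)}
    (he : IsPartiteEdge Prod.fst e) :
    ∀ v ∈ e, ∀ w ∈ e, effLabel v (coloring e) = effLabel w (coloring e) :=
  (mem_filter.1 (coloring_mem_agreeColors (agreeColors_nonempty hr he))).2

theorem spanning_coloring (hr : 2 ≤ r) (ht : 1 ≤ t) :
    Spanning (IsPartiteEdge (Prod.fst : Vertex r t → Fin r)) coloring := by
  intro u c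
  have : Nontrivial (Fin r) := Fin.nontrivial_iff_two_le.2 hr
  obtain ⟨j₀, hj₀⟩ := exists_ne u.1
  -- The edge through `u`: the other vertices agree with `u` at `c`, and the tag of `j₀`
  -- makes the tag sum `c`.
  let single : Fin (r + t) → Fin (t + 1) := Pi.single c (effLabel u c)
  let w : Fin r → Vertex r t := fun j =>
    (j, if j = u.1 then u.2.1 else single,
      (Pi.single u.1 u.2.2 + Pi.single j₀ (c - u.2.2) : Fin r → Fin (r + t)) j)
  have hwu : w u.1 = u := by simp [w, Pi.single_eq_of_ne hj₀.symm]
  have hlabel : ∀ j, effLabel (w j) c = effLabel u c := by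
    intro j
    by_cases hj : j = u.1
    · rw [hj, hwu]
    · have hwj : (w j).2.1 = single := if_neg hj
      have hsupp : #{c' | (w j).2.1 c' ≠ 0} ≤ budget t j := by
        rw [hwj]
        exact (card_filter_pi_single_ne_zero_le_one c _).trans (one_le_budget ht j)
      rw [effLabel_of_card_support_le hsupp, hwj]
      exact Pi.single_eq_same c _
  have hc : c ∈ agreeColors (univ.image w) := by
    refine mem_filter.2 ⟨mem_univ c, ?_⟩
    simp only [mem_image, mem_univ, true_and]
    rintro _ ⟨i, rfl⟩ _ ⟨j, rfl⟩
    rw [hlabel, hlabel]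
  have hsum : tagSum (univ.image w) = c := by
    rw [tagSum, sum_image fun a _ b _ h => congrArg Prod.fst h]
    simp [w, sum_add_distrib]
  refine ⟨univ.image w, isPartiteEdge_image w fun j => rfl, ?_,
    hwu ▸ mem_image_of_mem w (mem_univ u.1)⟩
  rw [coloring, hsum, if_pos hc]

theorem not_coversBy_coloring (hr : 0 < r) :
    ¬ CoversBy (IsPartiteEdge (Prod.fst : Vertex r t → Fin r)) coloring t :=
  not_coversBy_of_forall_exists_apply_eq (fun e he => effLabel_coloring_eq hr he) 0 (by simp)
    fun ψ hψ => ⟨(⟨0, hr⟩, ψ, 0),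
      effLabel_of_card_support_le (by simpa [budget] using hψ)⟩

end PartiteCover

theorem stmt_3 (r t : ℕ) (hr : 3 ≤ r) (ht : 1 ≤ t) :
    ∃ (V : Type) (_ : Fintype V) (part : V → Fin r) (χ : Finset V → Fin (r + t)),
      (∀ i : Fin r, ∃ v, part v = i) ∧ Spanning (IsPartiteEdge part) χ ∧
      ¬ CoversBy (IsPartiteEdge part) χ t := by
  have : NeZero (r + t) := ⟨by omega⟩
  exact ⟨PartiteCover.Vertex r t, inferInstance, Prod.fst, PartiteCover.coloring,
    fun i => ⟨(i, 0, 0), rfl⟩, PartiteCover.spanning_coloring (by omega) ht,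
    PartiteCover.not_coversBy_coloring (by omega)⟩
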